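/- For every positive integer m, ∫₀¹ x^{m−1} Li_3(x) dx = H_m/m³ + ζ(3)/m − ζ(2)/m². -/

import Mathlib

open scoped BigOperators

/-- harmonic number H_m = ∑_{j=1}^m 1/j -/
noncomputable def harm (m : ℕ) : ℝ := ∑ j ∈ Finset.range m, 1/((j : ℝ)+1)

/-- trilogarithm Li₃(x) = ∑_{k≥1} x^k/k³ -/
noncomputable def polylog3 (x : ℝ) : ℝ := ∑' k : ℕ, x^(k+1)/((k : ℝ)+1)^3

/-- ζ(2) -/
noncomputable def zeta2 : ℝ := ∑' k : ℕ, 1/((k : ℝ)+1)^2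

/-- ζ(3) -/
noncomputable def zeta3 : ℝ := ∑' k : ℕ, 1/((k : ℝ)+1)^3

open MeasureTheory Filter Topology

lemma summable_shift_pow {p : ℕ} (hp : 1 < p) :
    Summable (fun k : ℕ => 1/((k:ℝ)+1)^p) := by
  have h := (summable_nat_add_iff 1).2 (Real.summable_one_div_nat_pow.2 hp)
  simpa using h

lemma hasSum_harm (m : ℕ) :
    HasSum (fun n : ℕ => 1/((n:ℝ)+1) - 1/((n:ℝ)+(m:ℝ)+1)) (harm m) := by
  set f : ℕ → ℝ := fun n => 1/((n:ℝ)+1) with hf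
  have hnonneg : ∀ n : ℕ, 0 ≤ 1/((n:ℝ)+1) - 1/((n:ℝ)+(m:ℝ)+1) := by
    intro n
    have h1 : (0:ℝ) < (n:ℝ)+1 := by positivity
    have h2 : (n:ℝ)+1 ≤ (n:ℝ)+(m:ℝ)+1 := by
      have : (0:ℝ) ≤ (m:ℝ) := Nat.cast_nonneg m
      linarith
    have := one_div_le_one_div_of_le h1 h2
    linarith
  rw [hasSum_iff_tendsto_nat_of_nonneg hnonneg]
  have hps : ∀ N : ℕ, ∑ n ∈ Finset.range N, (1/((n:ℝ)+1) - 1/((n:ℝ)+(m:ℝ)+1))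
      = harm m - ∑ i ∈ Finset.range m, f (N+i) := by
    intro N
    have hshift : ∀ n : ℕ, 1/((n:ℝ)+(m:ℝ)+1) = f (n+m) := by
      intro n; simp only [hf]; push_cast; ring_nf
    simp_rw [Finset.sum_sub_distrib, hshift]
    have h1 : ∑ n ∈ Finset.range N, f (n+m) = ∑ n ∈ Finset.range N, f (m+n) := by
      congr 1; funext n; rw [Nat.add_comm]
    have h2 : ∑ n ∈ Finset.range (m+N), f n
        = ∑ n ∈ Finset.range m, f n + ∑ n ∈ Finset.range N, f (m+n) :=
      Finset.sum_range_add f m N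
    have h3 : ∑ n ∈ Finset.range (N+m), f n
        = ∑ n ∈ Finset.range N, f n + ∑ i ∈ Finset.range m, f (N+i) :=
      Finset.sum_range_add f N m
    have h4 : (m+N) = (N+m) := Nat.add_comm m N
    rw [h1]
    have : ∑ n ∈ Finset.range N, f (m+n)
        = ∑ n ∈ Finset.range (N+m), f n - ∑ n ∈ Finset.range m, f n := by
      rw [← h4, h2]; ring
    rw [this, h3]
    have hharm : harm m = ∑ n ∈ Finset.range m, f n := rfl
    rw [hharm]; ring
  simp_rw [hps]
  have htail : Tendsto (fun N : ℕ => ∑ i ∈ Finset.range m, f (N+i)) atTop (𝓝 0) := by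
    have : Tendsto (fun N : ℕ => ∑ i ∈ Finset.range m, f (N+i)) atTop
        (𝓝 (∑ i ∈ Finset.range m, (0:ℝ))) := by
      apply tendsto_finset_sum
      intro i _
      have h1 : Tendsto (fun N : ℕ => ((N:ℝ) + ((i:ℝ)+1))) atTop atTop :=
        tendsto_atTop_add_const_right _ _ tendsto_natCast_atTop_atTop
      have h2 := h1.inv_tendsto_atTop
      have : (fun N : ℕ => f (N+i)) = fun N : ℕ => ((N:ℝ) + ((i:ℝ)+1))⁻¹ := by
        funext N; simp [hf]; ring_nf
      rw [this]; exact h2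
    simpa using this
  have hfin := (tendsto_const_nhds : Filter.Tendsto (fun _ : ℕ => harm m) atTop (𝓝 (harm m))).sub htail
  simpa using hfin

lemma key_tsum (m : ℕ) (hm : 0 < m) :
    ∑' k : ℕ, 1/(((k:ℝ)+1)^3 * ((m:ℝ)+(k:ℝ)+1))
      = harm m / (m : ℝ)^3 + zeta3 / m - zeta2 / (m : ℝ)^2 := by
  have hm0 : (m:ℝ) ≠ 0 := Nat.cast_ne_zero.2 hm.ne'
  have h3 : HasSum (fun k : ℕ => 1/((k:ℝ)+1)^3) zeta3 :=
    (summable_shift_pow (by norm_num : (1:ℕ) < 3)).hasSum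
  have h2 : HasSum (fun k : ℕ => 1/((k:ℝ)+1)^2) zeta2 :=
    (summable_shift_pow (by norm_num : (1:ℕ) < 2)).hasSum
  have hT := hasSum_harm m
  have hcomb := ((h3.mul_left (1/(m:ℝ))).sub (h2.mul_left (1/(m:ℝ)^2))).add
    (hT.mul_left (1/(m:ℝ)^3))
  have heq : (fun k : ℕ => (1/(m:ℝ) * (1/((k:ℝ)+1)^3) - 1/(m:ℝ)^2 * (1/((k:ℝ)+1)^2))
      + 1/(m:ℝ)^3 * (1/((k:ℝ)+1) - 1/((k:ℝ)+(m:ℝ)+1)))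
      = fun k : ℕ => 1/(((k:ℝ)+1)^3 * ((m:ℝ)+(k:ℝ)+1)) := by
    funext k
    have hk : ((k:ℝ)+1) ≠ 0 := by positivity
    have hkm : ((k:ℝ)+(m:ℝ)+1) ≠ 0 := by positivity
    have hkm' : ((m:ℝ)+(k:ℝ)+1) ≠ 0 := by positivity
    field_simp
    ring
  rw [heq] at hcomb
  rw [hcomb.tsum_eq]
  field_simp
  ring

theorem stmt13 (m : ℕ) (hm : 0 < m) :
    ∫ x in (0:ℝ)..1, x^(m-1) * polylog3 x
      = harm m / (m : ℝ)^3 + zeta3 / m - zeta2 / (m : ℝ)^2 := by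
  set F : ℕ → ℝ → ℝ := fun k x => x^(m+k) / ((k:ℝ)+1)^3 with hF
  have hcont : ∀ k : ℕ, Continuous (F k) := by
    intro k; exact (continuous_pow (m+k)).div_const _
  have hFint : ∀ k : ℕ, IntegrableOn (F k) (Set.Ioc (0:ℝ) 1) volume := by
    intro k; exact (hcont k).integrableOn_Ioc
  have hval : ∀ k : ℕ, ∫ x in Set.Ioc (0:ℝ) 1, F k x
      = 1/(((k:ℝ)+1)^3 * ((m:ℝ)+(k:ℝ)+1)) := by
    intro k
    rw [← intervalIntegral.integral_of_le (zero_le_one)]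
    have : (∫ x in (0:ℝ)..1, F k x) = (∫ x in (0:ℝ)..1, x^(m+k)) / ((k:ℝ)+1)^3 := by
      simp [hF, intervalIntegral.integral_div]
    rw [this, integral_pow]
    have h1 : ((m:ℝ)+(k:ℝ)+1) ≠ 0 := by positivity
    have h2 : ((k:ℝ)+1)^3 ≠ 0 := by positivity
    rw [one_pow, zero_pow (by omega : m+k+1 ≠ 0)]
    push_cast
    field_simp
    ring
  have hnormval : ∀ k : ℕ, (∫ x in Set.Ioc (0:ℝ) 1, ‖F k x‖)
      = 1/(((k:ℝ)+1)^3 * ((m:ℝ)+(k:ℝ)+1)) := by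
    intro k
    rw [← hval k]
    apply setIntegral_congr_fun measurableSet_Ioc
    intro x hx
    have hx0 : (0:ℝ) ≤ x := le_of_lt hx.1
    have : 0 ≤ F k x := by
      simp only [hF]; positivity
    exact Real.norm_of_nonneg this
  have hsum : Summable (fun k : ℕ => ∫ x in Set.Ioc (0:ℝ) 1, ‖F k x‖) := by
    simp_rw [hnormval]
    apply Summable.of_nonneg_of_le (fun k => by positivity)
      (fun k => ?_) (summable_shift_pow (by norm_num : (1:ℕ) < 3))
    have h1 : (0:ℝ) < ((k:ℝ)+1)^3 := by positivity
    have h2 : (1:ℝ) ≤ ((m:ℝ)+(k:ℝ)+1) := by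
      have : (0:ℝ) ≤ (m:ℝ) := Nat.cast_nonneg m
      have : (0:ℝ) ≤ (k:ℝ) := Nat.cast_nonneg k
      linarith [Nat.cast_nonneg (α := ℝ) m, Nat.cast_nonneg (α := ℝ) k]
    calc 1/(((k:ℝ)+1)^3 * ((m:ℝ)+(k:ℝ)+1)) ≤ 1/(((k:ℝ)+1)^3 * 1) := by
          apply one_div_le_one_div_of_le (by positivity)
          exact mul_le_mul_of_nonneg_left h2 (le_of_lt h1)
      _ = 1/((k:ℝ)+1)^3 := by rw [mul_one]
  have hpoint : ∀ x : ℝ, x^(m-1) * polylog3 x = ∑' k : ℕ, F k x := by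
    intro x
    rw [polylog3, ← tsum_mul_left]
    congr 1; funext k
    rw [hF]
    simp only
    rw [mul_div_assoc', ← pow_add]
    congr 2
    omega
  rw [intervalIntegral.integral_of_le (zero_le_one)]
  calc ∫ x in Set.Ioc (0:ℝ) 1, x^(m-1) * polylog3 x
      = ∫ x in Set.Ioc (0:ℝ) 1, ∑' k : ℕ, F k x := by
        apply integral_congr_ae; filter_upwards with x; exact hpoint x
    _ = ∑' k : ℕ, ∫ x in Set.Ioc (0:ℝ) 1, F k x :=
        (integral_tsum_of_summable_integral_norm hFint hsum).symm
    _ = ∑' k : ℕ, 1/(((k:ℝ)+1)^3 * ((m:ℝ)+(k:ℝ)+1)) := by simp_rw [hval]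
    _ = harm m / (m : ℝ)^3 + zeta3 / m - zeta2 / (m : ℝ)^2 := key_tsum m hm
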